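/- Let Ω = (U,Ξ) be a unimodular system with |Ξ| = N and let L_Ω = Φ(U) ∩ ℤ^N be the associated lattice in ℝ^N with its standard inner product. Then the discriminant of L_Ω (the determinant of the Gram matrix of any ℤ-basis) equals the complexity c(Ω), the number of maximal linearly independent subsets of Ξ. -/

import Mathlib

/-!
Let `A` be the `n × N` matrix whose rows are a `ℤ`-basis `Φ(u₁), …, Φ(uₙ)` of `L_Ω`. The Gram
matrix is `A Aᵀ`, so by Cauchy–Binet its determinant is `∑ det (A_S)²` over the `n`-subsets `S` of
columns. The columns of `A_S` are the forms `ξ_k`, `k ∈ S`, evaluated at the `uᵢ`, so the minor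
vanishes unless `ξ_S` is a basis of `U*`. If it is, let `w_k` be the dual basis of `U`. Unimodularity
puts every `ξ_j` in the `ℤ`-span of `ξ_S`, so `ξ_j(w_k) ∈ ℤ`, i.e. `Φ(w_k) ∈ L_Ω`; hence
`w = C u` for an integer matrix `C`, and `C A_S = 1` forces `det A_S = ±1`. The sum therefore
counts the maximal linearly independent subsets.
-/

/-- `S` is a maximal linearly independent subset of the family of forms `ξ`. -/
def MaxLinIndep {ι : Type*} {U : Type*} [AddCommGroup U] [Module ℝ U]
    (ξ : ι → Module.Dual ℝ U) (S : Set ι) : Prop :=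
  LinearIndependent ℝ (fun i : S => ξ i) ∧
    ∀ T : Set ι, S ⊆ T → LinearIndependent ℝ (fun i : T => ξ i) → T = S

/-- A unimodular system: nonzero forms spanning `U*` such that every maximal linearly
independent subset generates the same abelian group `M` over `ℤ`. -/
def IsUnimodularSystem {ι : Type*} {U : Type*} [AddCommGroup U] [Module ℝ U]
    (ξ : ι → Module.Dual ℝ U) (M : Submodule ℤ (Module.Dual ℝ U)) : Prop :=
  (∀ k, ξ k ≠ 0) ∧ Submodule.span ℝ (Set.range ξ) = ⊤ ∧
    ∀ S : Set ι, MaxLinIndep ξ S → Submodule.span ℤ (ξ '' S) = M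

/-- The `ℤ`-submodule of integer points of `ι → ℝ`. -/
def intPts (ι : Type*) : Submodule ℤ (ι → ℝ) where
  carrier := {x | ∀ k, ∃ z : ℤ, x k = z}
  zero_mem' := fun k => ⟨0, by simp⟩
  add_mem' := by
    rintro a b ha hb k
    obtain ⟨z, hz⟩ := ha k; obtain ⟨w, hw⟩ := hb k
    exact ⟨z + w, by simp [hz, hw]⟩
  smul_mem' := by
    rintro c a ha k
    obtain ⟨z, hz⟩ := ha k
    exact ⟨c * z, by simp [hz, zsmul_eq_mul]⟩

/-- The evaluation map `Φ : U → ℝᴺ`, `Φ(u) = (ξ₁(u), …, ξ_N(u))`. -/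
noncomputable def PhiMap {N : ℕ} {U : Type*} [AddCommGroup U] [Module ℝ U]
    (ξ : Fin N → Module.Dual ℝ U) : U →ₗ[ℝ] (Fin N → ℝ) :=
  LinearMap.pi fun k => ξ k

open Finset Matrix Set.powersetCard exteriorPower Submodule

/-- Cauchy–Binet via `⋀ⁿ E`: the Gram determinant is `‖x₁ ∧ ⋯ ∧ xₙ‖²`, expanded in the
orthonormal basis of `⋀ⁿ E` induced by `b`. -/
theorem Matrix.det_gram_eq_sum_sq_det {n : ℕ} {E : Type*} [NormedAddCommGroup E]
    [InnerProductSpace ℝ E] [FiniteDimensional ℝ E] {ι : Type*} [Fintype ι] [LinearOrder ι]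
    (b : OrthonormalBasis ι ℝ E) (x : Fin n → E) :
    (gram ℝ x).det = ∑ s : Set.powersetCard ι n,
      (of fun i j => b.repr (x i) (ofFinEmbEquiv.symm s j)).det ^ 2 := by
  rw [← inner_ιMulti_self, real_inner_self_eq_norm_sq, ← (b.exteriorPower n).sum_sq_inner_right]
  congr! with s
  rw [← OrthonormalBasis.repr_apply_apply, ← OrthonormalBasis.coe_toBasis_repr_apply,
    OrthonormalBasis.toBasis_exteriorPower, basis_repr_apply, ιMultiDual_apply_ιMulti]
  simp [Module.Basis.coord_apply]

theorem Matrix.det_mul_transpose_self_eq_sum_sq_det_submatrix {n : ℕ} {ι : Type*} [Fintype ι]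
    [LinearOrder ι] (A : Matrix (Fin n) ι ℝ) :
    (A * Aᵀ).det =
      ∑ s : Set.powersetCard ι n, (A.submatrix id (ofFinEmbEquiv.symm s)).det ^ 2 := by
  have := det_gram_eq_sum_sq_det (EuclideanSpace.basisFun ι ℝ) (fun i => WithLp.toLp 2 (A i))
  convert this using 3
  · ext i j
    simp [gram_apply, mul_apply, PiLp.inner_apply, mul_comm]
  · rfl

section MaxLinIndep

variable {ι U : Type*} [AddCommGroup U] [Module ℝ U] {ξ : ι → Module.Dual ℝ U} {S : Set ι}

theorem maxLinIndep_iff :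
    MaxLinIndep ξ S ↔ LinearIndepOn ℝ ξ S ∧ Set.range ξ ⊆ span ℝ (ξ '' S) := by
  refine ⟨fun h => ⟨h.1, ?_⟩, fun h => ⟨h.1, fun T hST hT => ?_⟩⟩
  · rintro _ ⟨k, rfl⟩
    by_contra hk
    have hkS : k ∉ S := fun hk' => hk (subset_span ⟨k, hk', rfl⟩)
    have := h.2 (insert k S) (Set.subset_insert k S) ((linearIndepOn_insert hkS).2 ⟨h.1, hk⟩)
    exact hkS (this ▸ Set.mem_insert k S)
  · refine Set.Subset.antisymm (fun k hk => ?_) hST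
    by_contra hkS
    have hT : LinearIndepOn ℝ ξ T := hT
    exact ((linearIndepOn_insert hkS).1 (hT.mono (Set.insert_subset hk hST))).2 (h.2 ⟨k, rfl⟩)

theorem exists_maxLinIndep_superset (hS : LinearIndepOn ℝ ξ S) :
    ∃ T, S ⊆ T ∧ MaxLinIndep ξ T := by
  obtain ⟨T, -, hST, hspan, hT⟩ := exists_linearIndepOn_extension hS (Set.subset_univ S)
  exact ⟨T, hST, maxLinIndep_iff.2 ⟨hT, Set.image_univ ▸ hspan⟩⟩

theorem maxLinIndep_iff_ncard [Finite ι] [FiniteDimensional ℝ U]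
    (hspan : span ℝ (Set.range ξ) = ⊤) :
    MaxLinIndep ξ S ↔ LinearIndepOn ℝ ξ S ∧ S.ncard = Module.finrank ℝ U := by
  have := Fintype.ofFinite S
  rw [maxLinIndep_iff, ← Subspace.dual_finrank_eq, ← Nat.card_coe_set_eq,
    Nat.card_eq_fintype_card]
  refine and_congr_right fun hS => ?_
  rw [Set.image_eq_range, ← finrank_span_eq_card hS, ← span_le, hspan, top_le_iff]
  exact ⟨fun h => h ▸ finrank_top ℝ _, eq_top_of_finrank_eq⟩

open Classical in
theorem ncard_setOf_maxLinIndep [Fintype ι] [FiniteDimensional ℝ U] {n : ℕ}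
    (hU : Module.finrank ℝ U = n) (hspan : span ℝ (Set.range ξ) = ⊤) :
    {S | MaxLinIndep ξ S}.ncard =
      #{s : Set.powersetCard ι n | LinearIndepOn ℝ ξ (s : Set ι)} := by
  have hset : {S | MaxLinIndep ξ S} =
      SetLike.coe '' {s : Set.powersetCard ι n | LinearIndepOn ℝ ξ (s : Set ι)} := by
    ext S
    simp only [Set.mem_image, Set.mem_ofPred_eq]
    rw [maxLinIndep_iff_ncard hspan, hU]
    constructor
    · rintro ⟨hS, hcard⟩
      let s : Set.powersetCard ι n :=
        ⟨S.toFinite.toFinset, by rwa [Set.powersetCard.mem_iff, ← Set.ncard_eq_toFinset_card S]⟩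
      have hs : (s : Set ι) = S := S.toFinite.coe_toFinset
      exact ⟨s, hs ▸ hS, hs⟩
    · rintro ⟨s, hs, rfl⟩
      exact ⟨hs, Set.powersetCard.ncard_eq s⟩
  rw [hset, Set.ncard_image_of_injective _ SetLike.coe_injective, ← Set.ncard_coe_finset]
  congr
  ext
  simp

theorem IsUnimodularSystem.mem_span_int_of_maxLinIndep {M : Submodule ℤ (Module.Dual ℝ U)}
    (hsys : IsUnimodularSystem ξ M) (hS : MaxLinIndep ξ S) (k : ι) :
    ξ k ∈ span ℤ (ξ '' S) := by
  obtain ⟨T, hkT, hT⟩ := exists_maxLinIndep_superset (LinearIndepOn.singleton (hsys.1 k))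
  rw [hsys.2.2 S hS, ← hsys.2.2 T hT]
  exact subset_span ⟨k, hkT rfl, rfl⟩

end MaxLinIndep

theorem Matrix.exists_det_eq_intCast {m R : Type*} [Fintype m] [DecidableEq m] [CommRing R]
    {A : Matrix m m R} (h : ∀ i j, ∃ z : ℤ, A i j = z) : ∃ z : ℤ, A.det = z := by
  choose Z hZ using h
  refine ⟨(of Z).det, ?_⟩
  rw [← eq_intCast (Int.castRingHom R), RingHom.map_det]
  congr
  ext i j
  exact hZ i j

section DualFamily

variable {K U m : Type*} [Field K] [AddCommGroup U] [Module K U] [Fintype m] [DecidableEq m]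

theorem det_eq_zero_of_not_linearIndependent {f : m → Module.Dual K U} (u : m → U)
    (hf : ¬ LinearIndependent K f) : (of fun i j => f j (u i)).det = 0 := by
  obtain ⟨g, hsum, j, hj⟩ := Fintype.not_linearIndependent_iff.mp hf
  rw [← exists_mulVec_eq_zero_iff]
  refine ⟨g, fun h => hj (congrFun h j), funext fun i => ?_⟩
  simpa [mulVec, dotProduct, mul_comm] using LinearMap.congr_fun hsum (u i)

theorem exists_dual_family [FiniteDimensional K U] {f : m → Module.Dual K U}
    (hf : LinearIndependent K f) (hcard : Fintype.card m = Module.finrank K U) :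
    ∃ w : m → U, ∀ j k, f j (w k) = if j = k then 1 else 0 := by
  have hcard' := hcard.trans Subspace.dual_finrank_eq.symm
  let B := basisOfLinearIndependentOfCardEqFinrank' f hf hcard'
  refine ⟨fun k => (Module.evalEquiv K U).symm (B.dualBasis k), fun j k => ?_⟩
  rw [Module.apply_evalEquiv_symm_apply,
    ← coe_basisOfLinearIndependentOfCardEqFinrank' f hf hcard', B.dualBasis_apply_self]

end DualFamily

section IntegralDualFamily

variable {U m : Type*} [AddCommGroup U] [Module ℝ U] [Fintype m]

theorem exists_apply_eq_intCast_of_mem_span_int {f : m → Module.Dual ℝ U} {φ : Module.Dual ℝ U}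
    (hφ : φ ∈ span ℤ (Set.range f)) {w : U} (hw : ∀ j, ∃ z : ℤ, f j w = z) :
    ∃ z : ℤ, φ w = z := by
  obtain ⟨c, rfl⟩ := (mem_span_range_iff_exists_fun ℤ).1 hφ
  choose z hz using hw
  exact ⟨∑ j, c j * z j, by simp [hz]⟩

theorem sq_det_eq_one_of_dual_family_mem_span_int [DecidableEq m] {f : m → Module.Dual ℝ U}
    {u w : m → U}
    (hint : ∀ i j, ∃ z : ℤ, f j (u i) = z) (hw : ∀ j k, f j (w k) = if j = k then 1 else 0)
    (hwu : ∀ k, w k ∈ span ℤ (Set.range u)) : (of fun i j => f j (u i)).det ^ 2 = 1 := by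
  choose c hc using fun k => (mem_span_range_iff_exists_fun ℤ).1 (hwu k)
  have hCQ : (of fun k i => (c k i : ℝ)) * (of fun i j => f j (u i)) = 1 := by
    ext k j
    have : ∑ i, (c k i : ℝ) * f j (u i) = f j (w k) := by simp [← hc k, map_sum]
    simp [mul_apply, one_apply, this, hw, eq_comm]
  obtain ⟨dC, hdC⟩ :=
    exists_det_eq_intCast (A := of fun k i => (c k i : ℝ)) fun k i => ⟨c k i, rfl⟩
  obtain ⟨dQ, hdQ⟩ := exists_det_eq_intCast (A := of fun i j => f j (u i)) hint
  have hunit : dC * dQ = 1 := by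
    have := congrArg det hCQ
    rw [det_mul, det_one, hdC, hdQ] at this
    exact_mod_cast this
  rw [hdQ]
  exact_mod_cast Int.isUnit_sq (IsUnit.of_mul_eq_one_right _ hunit)

end IntegralDualFamily

section Lattice

variable {N n : ℕ} {U : Type*} [AddCommGroup U] [Module ℝ U] {ξ : Fin N → Module.Dual ℝ U}

noncomputable def phiLattice (ξ : Fin N → Module.Dual ℝ U) : Submodule ℤ (Fin N → ℝ) :=
  (LinearMap.range (PhiMap ξ)).restrictScalars ℤ ⊓ intPts (Fin N)

theorem phiMap_injective (hspan : span ℝ (Set.range ξ) = ⊤) :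
    Function.Injective (PhiMap ξ) := by
  rw [← LinearMap.ker_eq_bot, eq_bot_iff]
  intro v hv
  have : span ℝ (Set.range ξ) ≤ LinearMap.ker (Module.Dual.eval ℝ U v) :=
    span_le.2 (by rintro _ ⟨k, rfl⟩; exact congrFun hv k)
  rw [hspan, top_le_iff, LinearMap.ker_eq_top] at this
  exact (Module.forall_dual_apply_eq_zero_iff ℝ v).1 (fun φ => LinearMap.congr_fun this φ)

theorem mem_span_int_of_phiMap_mem_phiLattice {m : Type*} [Fintype m]
    (hspan : span ℝ (Set.range ξ) = ⊤) (b : Module.Basis m ℤ (phiLattice ξ)) {u : m → U}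
    (hu : ∀ i, PhiMap ξ (u i) = b i) {w : U} (hw : PhiMap ξ w ∈ phiLattice ξ) :
    w ∈ span ℤ (Set.range u) := by
  rw [mem_span_range_iff_exists_fun]
  refine ⟨b.repr ⟨_, hw⟩, phiMap_injective hspan ?_⟩
  have := congrArg Subtype.val (b.sum_repr ⟨_, hw⟩)
  rw [Submodule.coe_sum] at this
  simpa only [map_sum, map_zsmul, hu, Submodule.coe_smul] using this

open Classical in
theorem sq_det_submatrix_phiLattice [FiniteDimensional ℝ U] {M : Submodule ℤ (Module.Dual ℝ U)}
    (hU : Module.finrank ℝ U = n) (hsys : IsUnimodularSystem ξ M)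
    (b : Module.Basis (Fin n) ℤ (phiLattice ξ)) (s : Set.powersetCard (Fin N) n) :
    ((of fun i k => (b i : Fin N → ℝ) k).submatrix id (ofFinEmbEquiv.symm s)).det ^ 2 =
      if LinearIndepOn ℝ ξ (s : Set (Fin N)) then 1 else 0 := by
  set e := ofFinEmbEquiv.symm s
  choose u hu using fun i => (mem_inf.1 (b i).2).1
  have hint : ∀ i k, ∃ z : ℤ, PhiMap ξ (u i) k = z := fun i => hu i ▸ (mem_inf.1 (b i).2).2
  have hQ : (of fun i k => (b i : Fin N → ℝ) k).submatrix id e =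
      of fun i j => (ξ ∘ e) j (u i) := by
    ext i j
    simp [← hu]
    rfl
  have hse : (s : Set (Fin N)) = Set.range e := by
    ext k
    exact (mem_range_ofFinEmbEquiv_symm_iff_mem s k).symm
  rw [hQ, hse, linearIndepOn_range_iff e.injective]
  split_ifs with hind
  · obtain ⟨w, hw⟩ := exists_dual_family hind (by simp [hU])
    have hmax : MaxLinIndep ξ (Set.range e) := by
      rw [maxLinIndep_iff_ncard hsys.2.1, hU, linearIndepOn_range_iff e.injective, ← hse]
      exact ⟨hind, ncard_eq s⟩
    refine sq_det_eq_one_of_dual_family_mem_span_int (fun i j => hint i (e j)) hw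
      fun k => mem_span_int_of_phiMap_mem_phiLattice hsys.2.1 b hu ⟨⟨w k, rfl⟩, fun l => ?_⟩
    refine exists_apply_eq_intCast_of_mem_span_int (f := ξ ∘ e) ?_ fun j => ?_
    · rw [Set.range_comp]
      exact hsys.mem_span_int_of_maxLinIndep hmax l
    · exact ⟨if j = k then 1 else 0, by rw [hw]; split_ifs <;> simp⟩
  · rw [det_eq_zero_of_not_linearIndependent u hind]
    norm_num

end Lattice

/-- The discriminant of the lattice `L_Ω = Φ(U) ∩ ℤᴺ` (the Gram determinant of any
`ℤ`-basis with respect to the standard inner product of `ℝᴺ`) equals the complexity of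
the unimodular system, i.e. the number of maximal linearly independent subsets of `Ξ`. -/
theorem stmt11 {N n : ℕ} {U : Type*} [AddCommGroup U] [Module ℝ U] [FiniteDimensional ℝ U]
    (hU : Module.finrank ℝ U = n)
    (ξ : Fin N → Module.Dual ℝ U) (M : Submodule ℤ (Module.Dual ℝ U))
    (hsys : IsUnimodularSystem ξ M)
    (b : Module.Basis (Fin n)
      ℤ ((LinearMap.range (PhiMap ξ)).restrictScalars ℤ ⊓ intPts (Fin N) :
          Submodule ℤ (Fin N → ℝ))) :
    (Matrix.of fun i j : Fin n =>
        ∑ k : Fin N, ((b i : Fin N → ℝ) k) * ((b j : Fin N → ℝ) k)).det =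
      (Set.ncard {S : Set (Fin N) | MaxLinIndep ξ S} : ℝ) := by
  classical
  have hgram : (of fun i j => ∑ k, (b i : Fin N → ℝ) k * (b j : Fin N → ℝ) k) =
      (of fun i k => (b i : Fin N → ℝ) k) * (of fun i k => (b i : Fin N → ℝ) k)ᵀ := by
    ext i j
    simp [mul_apply]
  rw [hgram, det_mul_transpose_self_eq_sum_sq_det_submatrix, ncard_setOf_maxLinIndep hU hsys.2.1,
    ← Finset.sum_boole]
  exact Finset.sum_congr rfl fun s _ => sq_det_submatrix_phiLattice hU hsys b s
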